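/- arXiv:math/9812141 — 2 statements merged into one kernel-verified Lean document; each statement's English description precedes it below -/
import Mathlib

section
/- The generalized flips of the two SO_q(3)-invariant linear connections are compatible with the covariant metric up to conformal factors q^{±2}: for S = q R̂ one has Σ_{j,k,l} S^{ij}_{hk} g^{kl} S^{mn}_{jl} = q^{2} g^{im} δ^n_h for all i, m, n, h ∈ {1,2,3}, and for S = (q R̂)^{-1} (which exists) one has Σ_{j,k,l} S^{ij}_{hk} g^{kl} S^{mn}_{jl} = q^{-2} g^{im} δ^n_h for all i, m, n, h. -/
noncomputable section

/-- The FRT R-matrix of `SO_q(3)`: `Rfrt q i j k l = R^{ij}_{kl}`, with indices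
`0, 1, 2` corresponding to `(−, 0, +)` (i.e. to `1, 2, 3`). -/
def Rfrt (q : ℝ) (i j k l : Fin 3) : ℂ :=
  let Q : ℂ := (q : ℂ)
  let s : ℂ := (Real.sqrt q : ℂ)
  match i.1, j.1, k.1, l.1 with
  | 0,0,0,0 => Q                        -- R^{11}_{11} = q
  | 2,2,2,2 => Q                        -- R^{33}_{33} = q
  | 1,1,1,1 => 1                        -- R^{22}_{22} = 1
  | 0,1,0,1 => 1                        -- R^{12}_{12} = 1
  | 1,0,1,0 => 1                        -- R^{21}_{21} = 1
  | 1,2,1,2 => 1                        -- R^{23}_{23} = 1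
  | 2,1,2,1 => 1                        -- R^{32}_{32} = 1
  | 0,2,0,2 => Q⁻¹                      -- R^{13}_{13} = q⁻¹
  | 2,0,2,0 => Q⁻¹                      -- R^{31}_{31} = q⁻¹
  | 1,0,0,1 => Q - Q⁻¹                  -- R^{21}_{12} = q − q⁻¹
  | 2,1,1,2 => Q - Q⁻¹                  -- R^{32}_{23} = q − q⁻¹
  | 2,0,0,2 => (Q - Q⁻¹) * (1 - Q⁻¹)    -- R^{31}_{13} = (q − q⁻¹)(1 − q⁻¹)
  | 1,1,0,2 => -(Q - Q⁻¹) * s⁻¹         -- R^{22}_{13} = −(q − q⁻¹) q^{-1/2}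
  | 2,0,1,1 => -(Q - Q⁻¹) * s⁻¹         -- R^{31}_{22} = −(q − q⁻¹) q^{-1/2}
  | _,_,_,_ => 0

/-- The braid matrix `R̂` of `SO_q(3)`, as a linear endomorphism (matrix) of `ℂ³ ⊗ ℂ³`:
`R̂^{ij}_{kl} = R^{ji}_{kl}`, with row index the pair `(i,j)` and column index `(k,l)`. -/
def Rhat (q : ℝ) : Matrix (Fin 3 × Fin 3) (Fin 3 × Fin 3) ℂ :=
  fun p r => Rfrt q p.2 p.1 r.1 r.2

/-- The `SO_q(3)`-covariant metric: `g_{13} = q^{-1/2}`, `g_{22} = 1`, `g_{31} = q^{1/2}`,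
all other entries zero (indices `0, 1, 2` correspond to `1, 2, 3`); `g^{ij} := g_{ij}`. -/
def gm (q : ℝ) (i j : Fin 3) : ℂ :=
  match i.1, j.1 with
  | 0, 2 => ((Real.sqrt q : ℂ))⁻¹
  | 1, 1 => 1
  | 2, 0 => (Real.sqrt q : ℂ)
  | _, _ => 0

def Binv (q : ℝ) : Matrix (Fin 3 × Fin 3) (Fin 3 × Fin 3) ℂ :=
  fun p r =>
  let Q : ℂ := (q : ℂ)
  let s : ℂ := (Real.sqrt q : ℂ)
  match p.1.1, p.2.1, r.1.1, r.2.1 with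
  | 0,0,0,0 => (Q^2)⁻¹
  | 2,2,2,2 => (Q^2)⁻¹
  | 0,1,1,0 => Q⁻¹
  | 1,0,0,1 => Q⁻¹
  | 1,1,1,1 => Q⁻¹
  | 1,2,2,1 => Q⁻¹
  | 2,1,1,2 => Q⁻¹
  | 0,2,2,0 => 1
  | 2,0,0,2 => 1
  | 1,0,1,0 => -(Q - Q⁻¹) * Q⁻¹
  | 2,1,2,1 => -(Q - Q⁻¹) * Q⁻¹
  | 1,1,2,0 => (Q - Q⁻¹) * s⁻¹
  | 2,0,1,1 => (Q - Q⁻¹) * s⁻¹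
  | 2,0,2,0 => (Q - Q⁻¹) * (1 - Q⁻¹)
  | _,_,_,_ => 0

lemma Rh0000 (q:ℝ) : Rhat q (0, 0) (0, 0) = (q:ℂ) := rfl
lemma Bv0000 (q:ℝ) : Binv q (0, 0) (0, 0) = ((q:ℂ)^2)⁻¹ := rfl
lemma Rh0001 (q:ℝ) : Rhat q (0, 0) (0, 1) = 0 := rfl
lemma Bv0001 (q:ℝ) : Binv q (0, 0) (0, 1) = 0 := rfl
lemma Rh0002 (q:ℝ) : Rhat q (0, 0) (0, 2) = 0 := rfl
lemma Bv0002 (q:ℝ) : Binv q (0, 0) (0, 2) = 0 := rfl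
lemma Rh0010 (q:ℝ) : Rhat q (0, 0) (1, 0) = 0 := rfl
lemma Bv0010 (q:ℝ) : Binv q (0, 0) (1, 0) = 0 := rfl
lemma Rh0011 (q:ℝ) : Rhat q (0, 0) (1, 1) = 0 := rfl
lemma Bv0011 (q:ℝ) : Binv q (0, 0) (1, 1) = 0 := rfl
lemma Rh0012 (q:ℝ) : Rhat q (0, 0) (1, 2) = 0 := rfl
lemma Bv0012 (q:ℝ) : Binv q (0, 0) (1, 2) = 0 := rfl
lemma Rh0020 (q:ℝ) : Rhat q (0, 0) (2, 0) = 0 := rfl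
lemma Bv0020 (q:ℝ) : Binv q (0, 0) (2, 0) = 0 := rfl
lemma Rh0021 (q:ℝ) : Rhat q (0, 0) (2, 1) = 0 := rfl
lemma Bv0021 (q:ℝ) : Binv q (0, 0) (2, 1) = 0 := rfl
lemma Rh0022 (q:ℝ) : Rhat q (0, 0) (2, 2) = 0 := rfl
lemma Bv0022 (q:ℝ) : Binv q (0, 0) (2, 2) = 0 := rfl
lemma Rh0100 (q:ℝ) : Rhat q (0, 1) (0, 0) = 0 := rfl
lemma Bv0100 (q:ℝ) : Binv q (0, 1) (0, 0) = 0 := rfl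
lemma Rh0101 (q:ℝ) : Rhat q (0, 1) (0, 1) = (q:ℂ) - (q:ℂ)⁻¹ := rfl
lemma Bv0101 (q:ℝ) : Binv q (0, 1) (0, 1) = 0 := rfl
lemma Rh0102 (q:ℝ) : Rhat q (0, 1) (0, 2) = 0 := rfl
lemma Bv0102 (q:ℝ) : Binv q (0, 1) (0, 2) = 0 := rfl
lemma Rh0110 (q:ℝ) : Rhat q (0, 1) (1, 0) = 1 := rfl
lemma Bv0110 (q:ℝ) : Binv q (0, 1) (1, 0) = (q:ℂ)⁻¹ := rfl
lemma Rh0111 (q:ℝ) : Rhat q (0, 1) (1, 1) = 0 := rfl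
lemma Bv0111 (q:ℝ) : Binv q (0, 1) (1, 1) = 0 := rfl
lemma Rh0112 (q:ℝ) : Rhat q (0, 1) (1, 2) = 0 := rfl
lemma Bv0112 (q:ℝ) : Binv q (0, 1) (1, 2) = 0 := rfl
lemma Rh0120 (q:ℝ) : Rhat q (0, 1) (2, 0) = 0 := rfl
lemma Bv0120 (q:ℝ) : Binv q (0, 1) (2, 0) = 0 := rfl
lemma Rh0121 (q:ℝ) : Rhat q (0, 1) (2, 1) = 0 := rfl
lemma Bv0121 (q:ℝ) : Binv q (0, 1) (2, 1) = 0 := rfl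
lemma Rh0122 (q:ℝ) : Rhat q (0, 1) (2, 2) = 0 := rfl
lemma Bv0122 (q:ℝ) : Binv q (0, 1) (2, 2) = 0 := rfl
lemma Rh0200 (q:ℝ) : Rhat q (0, 2) (0, 0) = 0 := rfl
lemma Bv0200 (q:ℝ) : Binv q (0, 2) (0, 0) = 0 := rfl
lemma Rh0201 (q:ℝ) : Rhat q (0, 2) (0, 1) = 0 := rfl
lemma Bv0201 (q:ℝ) : Binv q (0, 2) (0, 1) = 0 := rfl
lemma Rh0202 (q:ℝ) : Rhat q (0, 2) (0, 2) = ((q:ℂ) - (q:ℂ)⁻¹) * (1 - (q:ℂ)⁻¹) := rfl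
lemma Bv0202 (q:ℝ) : Binv q (0, 2) (0, 2) = 0 := rfl
lemma Rh0210 (q:ℝ) : Rhat q (0, 2) (1, 0) = 0 := rfl
lemma Bv0210 (q:ℝ) : Binv q (0, 2) (1, 0) = 0 := rfl
lemma Rh0211 (q:ℝ) : Rhat q (0, 2) (1, 1) = -((q:ℂ) - (q:ℂ)⁻¹) * ((Real.sqrt q : ℝ) : ℂ)⁻¹ := rfl
lemma Bv0211 (q:ℝ) : Binv q (0, 2) (1, 1) = 0 := rfl
lemma Rh0212 (q:ℝ) : Rhat q (0, 2) (1, 2) = 0 := rfl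
lemma Bv0212 (q:ℝ) : Binv q (0, 2) (1, 2) = 0 := rfl
lemma Rh0220 (q:ℝ) : Rhat q (0, 2) (2, 0) = (q:ℂ)⁻¹ := rfl
lemma Bv0220 (q:ℝ) : Binv q (0, 2) (2, 0) = 1 := rfl
lemma Rh0221 (q:ℝ) : Rhat q (0, 2) (2, 1) = 0 := rfl
lemma Bv0221 (q:ℝ) : Binv q (0, 2) (2, 1) = 0 := rfl
lemma Rh0222 (q:ℝ) : Rhat q (0, 2) (2, 2) = 0 := rfl
lemma Bv0222 (q:ℝ) : Binv q (0, 2) (2, 2) = 0 := rfl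
lemma Rh1000 (q:ℝ) : Rhat q (1, 0) (0, 0) = 0 := rfl
lemma Bv1000 (q:ℝ) : Binv q (1, 0) (0, 0) = 0 := rfl
lemma Rh1001 (q:ℝ) : Rhat q (1, 0) (0, 1) = 1 := rfl
lemma Bv1001 (q:ℝ) : Binv q (1, 0) (0, 1) = (q:ℂ)⁻¹ := rfl
lemma Rh1002 (q:ℝ) : Rhat q (1, 0) (0, 2) = 0 := rfl
lemma Bv1002 (q:ℝ) : Binv q (1, 0) (0, 2) = 0 := rfl
lemma Rh1010 (q:ℝ) : Rhat q (1, 0) (1, 0) = 0 := rfl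
lemma Bv1010 (q:ℝ) : Binv q (1, 0) (1, 0) = -((q:ℂ) - (q:ℂ)⁻¹) * (q:ℂ)⁻¹ := rfl
lemma Rh1011 (q:ℝ) : Rhat q (1, 0) (1, 1) = 0 := rfl
lemma Bv1011 (q:ℝ) : Binv q (1, 0) (1, 1) = 0 := rfl
lemma Rh1012 (q:ℝ) : Rhat q (1, 0) (1, 2) = 0 := rfl
lemma Bv1012 (q:ℝ) : Binv q (1, 0) (1, 2) = 0 := rfl
lemma Rh1020 (q:ℝ) : Rhat q (1, 0) (2, 0) = 0 := rfl
lemma Bv1020 (q:ℝ) : Binv q (1, 0) (2, 0) = 0 := rfl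
lemma Rh1021 (q:ℝ) : Rhat q (1, 0) (2, 1) = 0 := rfl
lemma Bv1021 (q:ℝ) : Binv q (1, 0) (2, 1) = 0 := rfl
lemma Rh1022 (q:ℝ) : Rhat q (1, 0) (2, 2) = 0 := rfl
lemma Bv1022 (q:ℝ) : Binv q (1, 0) (2, 2) = 0 := rfl
lemma Rh1100 (q:ℝ) : Rhat q (1, 1) (0, 0) = 0 := rfl
lemma Bv1100 (q:ℝ) : Binv q (1, 1) (0, 0) = 0 := rfl
lemma Rh1101 (q:ℝ) : Rhat q (1, 1) (0, 1) = 0 := rfl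
lemma Bv1101 (q:ℝ) : Binv q (1, 1) (0, 1) = 0 := rfl
lemma Rh1102 (q:ℝ) : Rhat q (1, 1) (0, 2) = -((q:ℂ) - (q:ℂ)⁻¹) * ((Real.sqrt q : ℝ) : ℂ)⁻¹ := rfl
lemma Bv1102 (q:ℝ) : Binv q (1, 1) (0, 2) = 0 := rfl
lemma Rh1110 (q:ℝ) : Rhat q (1, 1) (1, 0) = 0 := rfl
lemma Bv1110 (q:ℝ) : Binv q (1, 1) (1, 0) = 0 := rfl
lemma Rh1111 (q:ℝ) : Rhat q (1, 1) (1, 1) = 1 := rfl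
lemma Bv1111 (q:ℝ) : Binv q (1, 1) (1, 1) = (q:ℂ)⁻¹ := rfl
lemma Rh1112 (q:ℝ) : Rhat q (1, 1) (1, 2) = 0 := rfl
lemma Bv1112 (q:ℝ) : Binv q (1, 1) (1, 2) = 0 := rfl
lemma Rh1120 (q:ℝ) : Rhat q (1, 1) (2, 0) = 0 := rfl
lemma Bv1120 (q:ℝ) : Binv q (1, 1) (2, 0) = ((q:ℂ) - (q:ℂ)⁻¹) * ((Real.sqrt q : ℝ) : ℂ)⁻¹ := rfl
lemma Rh1121 (q:ℝ) : Rhat q (1, 1) (2, 1) = 0 := rfl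
lemma Bv1121 (q:ℝ) : Binv q (1, 1) (2, 1) = 0 := rfl
lemma Rh1122 (q:ℝ) : Rhat q (1, 1) (2, 2) = 0 := rfl
lemma Bv1122 (q:ℝ) : Binv q (1, 1) (2, 2) = 0 := rfl
lemma Rh1200 (q:ℝ) : Rhat q (1, 2) (0, 0) = 0 := rfl
lemma Bv1200 (q:ℝ) : Binv q (1, 2) (0, 0) = 0 := rfl
lemma Rh1201 (q:ℝ) : Rhat q (1, 2) (0, 1) = 0 := rfl
lemma Bv1201 (q:ℝ) : Binv q (1, 2) (0, 1) = 0 := rfl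
lemma Rh1202 (q:ℝ) : Rhat q (1, 2) (0, 2) = 0 := rfl
lemma Bv1202 (q:ℝ) : Binv q (1, 2) (0, 2) = 0 := rfl
lemma Rh1210 (q:ℝ) : Rhat q (1, 2) (1, 0) = 0 := rfl
lemma Bv1210 (q:ℝ) : Binv q (1, 2) (1, 0) = 0 := rfl
lemma Rh1211 (q:ℝ) : Rhat q (1, 2) (1, 1) = 0 := rfl
lemma Bv1211 (q:ℝ) : Binv q (1, 2) (1, 1) = 0 := rfl
lemma Rh1212 (q:ℝ) : Rhat q (1, 2) (1, 2) = (q:ℂ) - (q:ℂ)⁻¹ := rfl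
lemma Bv1212 (q:ℝ) : Binv q (1, 2) (1, 2) = 0 := rfl
lemma Rh1220 (q:ℝ) : Rhat q (1, 2) (2, 0) = 0 := rfl
lemma Bv1220 (q:ℝ) : Binv q (1, 2) (2, 0) = 0 := rfl
lemma Rh1221 (q:ℝ) : Rhat q (1, 2) (2, 1) = 1 := rfl
lemma Bv1221 (q:ℝ) : Binv q (1, 2) (2, 1) = (q:ℂ)⁻¹ := rfl
lemma Rh1222 (q:ℝ) : Rhat q (1, 2) (2, 2) = 0 := rfl
lemma Bv1222 (q:ℝ) : Binv q (1, 2) (2, 2) = 0 := rfl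
lemma Rh2000 (q:ℝ) : Rhat q (2, 0) (0, 0) = 0 := rfl
lemma Bv2000 (q:ℝ) : Binv q (2, 0) (0, 0) = 0 := rfl
lemma Rh2001 (q:ℝ) : Rhat q (2, 0) (0, 1) = 0 := rfl
lemma Bv2001 (q:ℝ) : Binv q (2, 0) (0, 1) = 0 := rfl
lemma Rh2002 (q:ℝ) : Rhat q (2, 0) (0, 2) = (q:ℂ)⁻¹ := rfl
lemma Bv2002 (q:ℝ) : Binv q (2, 0) (0, 2) = 1 := rfl
lemma Rh2010 (q:ℝ) : Rhat q (2, 0) (1, 0) = 0 := rfl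
lemma Bv2010 (q:ℝ) : Binv q (2, 0) (1, 0) = 0 := rfl
lemma Rh2011 (q:ℝ) : Rhat q (2, 0) (1, 1) = 0 := rfl
lemma Bv2011 (q:ℝ) : Binv q (2, 0) (1, 1) = ((q:ℂ) - (q:ℂ)⁻¹) * ((Real.sqrt q : ℝ) : ℂ)⁻¹ := rfl
lemma Rh2012 (q:ℝ) : Rhat q (2, 0) (1, 2) = 0 := rfl
lemma Bv2012 (q:ℝ) : Binv q (2, 0) (1, 2) = 0 := rfl
lemma Rh2020 (q:ℝ) : Rhat q (2, 0) (2, 0) = 0 := rfl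
lemma Bv2020 (q:ℝ) : Binv q (2, 0) (2, 0) = ((q:ℂ) - (q:ℂ)⁻¹) * (1 - (q:ℂ)⁻¹) := rfl
lemma Rh2021 (q:ℝ) : Rhat q (2, 0) (2, 1) = 0 := rfl
lemma Bv2021 (q:ℝ) : Binv q (2, 0) (2, 1) = 0 := rfl
lemma Rh2022 (q:ℝ) : Rhat q (2, 0) (2, 2) = 0 := rfl
lemma Bv2022 (q:ℝ) : Binv q (2, 0) (2, 2) = 0 := rfl
lemma Rh2100 (q:ℝ) : Rhat q (2, 1) (0, 0) = 0 := rfl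
lemma Bv2100 (q:ℝ) : Binv q (2, 1) (0, 0) = 0 := rfl
lemma Rh2101 (q:ℝ) : Rhat q (2, 1) (0, 1) = 0 := rfl
lemma Bv2101 (q:ℝ) : Binv q (2, 1) (0, 1) = 0 := rfl
lemma Rh2102 (q:ℝ) : Rhat q (2, 1) (0, 2) = 0 := rfl
lemma Bv2102 (q:ℝ) : Binv q (2, 1) (0, 2) = 0 := rfl
lemma Rh2110 (q:ℝ) : Rhat q (2, 1) (1, 0) = 0 := rfl
lemma Bv2110 (q:ℝ) : Binv q (2, 1) (1, 0) = 0 := rfl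
lemma Rh2111 (q:ℝ) : Rhat q (2, 1) (1, 1) = 0 := rfl
lemma Bv2111 (q:ℝ) : Binv q (2, 1) (1, 1) = 0 := rfl
lemma Rh2112 (q:ℝ) : Rhat q (2, 1) (1, 2) = 1 := rfl
lemma Bv2112 (q:ℝ) : Binv q (2, 1) (1, 2) = (q:ℂ)⁻¹ := rfl
lemma Rh2120 (q:ℝ) : Rhat q (2, 1) (2, 0) = 0 := rfl
lemma Bv2120 (q:ℝ) : Binv q (2, 1) (2, 0) = 0 := rfl
lemma Rh2121 (q:ℝ) : Rhat q (2, 1) (2, 1) = 0 := rfl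
lemma Bv2121 (q:ℝ) : Binv q (2, 1) (2, 1) = -((q:ℂ) - (q:ℂ)⁻¹) * (q:ℂ)⁻¹ := rfl
lemma Rh2122 (q:ℝ) : Rhat q (2, 1) (2, 2) = 0 := rfl
lemma Bv2122 (q:ℝ) : Binv q (2, 1) (2, 2) = 0 := rfl
lemma Rh2200 (q:ℝ) : Rhat q (2, 2) (0, 0) = 0 := rfl
lemma Bv2200 (q:ℝ) : Binv q (2, 2) (0, 0) = 0 := rfl
lemma Rh2201 (q:ℝ) : Rhat q (2, 2) (0, 1) = 0 := rfl
lemma Bv2201 (q:ℝ) : Binv q (2, 2) (0, 1) = 0 := rfl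
lemma Rh2202 (q:ℝ) : Rhat q (2, 2) (0, 2) = 0 := rfl
lemma Bv2202 (q:ℝ) : Binv q (2, 2) (0, 2) = 0 := rfl
lemma Rh2210 (q:ℝ) : Rhat q (2, 2) (1, 0) = 0 := rfl
lemma Bv2210 (q:ℝ) : Binv q (2, 2) (1, 0) = 0 := rfl
lemma Rh2211 (q:ℝ) : Rhat q (2, 2) (1, 1) = 0 := rfl
lemma Bv2211 (q:ℝ) : Binv q (2, 2) (1, 1) = 0 := rfl
lemma Rh2212 (q:ℝ) : Rhat q (2, 2) (1, 2) = 0 := rfl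
lemma Bv2212 (q:ℝ) : Binv q (2, 2) (1, 2) = 0 := rfl
lemma Rh2220 (q:ℝ) : Rhat q (2, 2) (2, 0) = 0 := rfl
lemma Bv2220 (q:ℝ) : Binv q (2, 2) (2, 0) = 0 := rfl
lemma Rh2221 (q:ℝ) : Rhat q (2, 2) (2, 1) = 0 := rfl
lemma Bv2221 (q:ℝ) : Binv q (2, 2) (2, 1) = 0 := rfl
lemma Rh2222 (q:ℝ) : Rhat q (2, 2) (2, 2) = (q:ℂ) := rfl
lemma Bv2222 (q:ℝ) : Binv q (2, 2) (2, 2) = ((q:ℂ)^2)⁻¹ := rfl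
lemma G00 (q:ℝ) : gm q 0 0 = 0 := rfl
lemma G01 (q:ℝ) : gm q 0 1 = 0 := rfl
lemma G02 (q:ℝ) : gm q 0 2 = ((Real.sqrt q : ℝ) : ℂ)⁻¹ := rfl
lemma G10 (q:ℝ) : gm q 1 0 = 0 := rfl
lemma G11 (q:ℝ) : gm q 1 1 = 1 := rfl
lemma G12 (q:ℝ) : gm q 1 2 = 0 := rfl
lemma G20 (q:ℝ) : gm q 2 0 = ((Real.sqrt q : ℝ) : ℂ) := rfl
lemma G21 (q:ℝ) : gm q 2 1 = 0 := rfl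
lemma G22 (q:ℝ) : gm q 2 2 = 0 := rfl

lemma fm0 (h : 0 < 3) : (⟨0, h⟩ : Fin 3) = 0 := rfl
lemma fm1 (h : 1 < 3) : (⟨1, h⟩ : Fin 3) = 1 := rfl
lemma fm2 (h : 2 < 3) : (⟨2, h⟩ : Fin 3) = 2 := rfl

set_option maxHeartbeats 2000000 in
lemma right_inv (q : ℝ) (hq : 0 < q) :
    ((q : ℂ) • Rhat q) * Binv q = 1 := by
  have hs0 : ((Real.sqrt q : ℝ) : ℂ) ≠ 0 := by
    exact_mod_cast (Real.sqrt_pos.mpr hq).ne'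
  have hq2 : (q : ℂ) = ((Real.sqrt q : ℝ) : ℂ) ^ 2 := by
    rw [← Complex.ofReal_pow, Real.sq_sqrt hq.le]
  ext ⟨i, j⟩ ⟨k, l⟩
  fin_cases i <;> fin_cases j <;> fin_cases k <;> fin_cases l <;>
    simp only [fm0, fm1, fm2, Matrix.mul_apply, Matrix.smul_apply, Matrix.one_apply,
      Fintype.sum_prod_type, Fin.sum_univ_three, smul_eq_mul, Prod.mk.injEq, Rh0000, Bv0000, Rh0001, Bv0001, Rh0002, Bv0002, Rh0010, Bv0010, Rh0011, Bv0011, Rh0012, Bv0012, Rh0020, Bv0020, Rh0021, Bv0021, Rh0022, Bv0022, Rh0100, Bv0100, Rh0101, Bv0101, Rh0102, Bv0102, Rh0110, Bv0110, Rh0111, Bv0111, Rh0112, Bv0112, Rh0120, Bv0120, Rh0121, Bv0121, Rh0122, Bv0122, Rh0200, Bv0200, Rh0201, Bv0201, Rh0202, Bv0202, Rh0210, Bv0210, Rh0211, Bv0211, Rh0212, Bv0212, Rh0220, Bv0220, Rh0221, Bv0221, Rh0222, Bv0222, Rh1000, Bv1000, Rh1001, Bv1001, Rh1002, Bv1002,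 Rh1010, Bv1010, Rh1011, Bv1011, Rh1012, Bv1012, Rh1020, Bv1020, Rh1021, Bv1021, Rh1022, Bv1022, Rh1100, Bv1100, Rh1101, Bv1101, Rh1102, Bv1102, Rh1110, Bv1110, Rh1111, Bv1111, Rh1112, Bv1112, Rh1120, Bv1120, Rh1121, Bv1121, Rh1122, Bv1122, Rh1200, Bv1200, Rh1201, Bv1201, Rh1202, Bv1202, Rh1210, Bv1210, Rh1211, Bv1211, Rh1212, Bv1212, Rh1220, Bv1220, Rh1221, Bv1221, Rh1222, Bv1222, Rh2000, Bv2000, Rh2001, Bv2001, Rh2002, Bv2002, Rh2010, Bv2010, Rh2011, Bv2011, Rh2012, Bv2012, Rh2020, Bv2020, Rh2021, Bv2021, Rh2022, Bv2022, Rh2100, Bv2100, Rh2101, Bv2101, Rh2102, Bv2102, Rh2110, Bv2110, Rh2111, Bv2111, Rh2112, Bv2112, Rh2120, Bv2120, Rh2121, Bv2121, Rh2122, Bv2122, Rh2200, Bv2200, Rh2201, Bv2201, Rh2202, Bv2202, Rh2210, Bv2210, Rh2211, Bv2211, Rh2212, Bv2212, Rh2220, Bv2220, Rh2221, Bv2221,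 Rh2222, Bv2222, G00, G01, G02, G10, G11, G12, G20, G21, G22, hq2] <;>
    first
      | rfl
      | (norm_num [Fin.ext_iff]
         try field_simp
         try ring)
  all_goals try (field_simp; ring)
  all_goals exact Or.inl trivial


set_option maxHeartbeats 2000000 in
/-- The generalized flips are compatible with the covariant metric up to
conformal factors `q^{±2}`: for `S = q R̂`,
`Σ_{j,k,l} S^{ij}_{hk} g^{kl} S^{mn}_{jl} = q² g^{im} δ^n_h`, and for `S = (q R̂)⁻¹`
(which exists), `Σ_{j,k,l} S^{ij}_{hk} g^{kl} S^{mn}_{jl} = q⁻² g^{im} δ^n_h`. -/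
theorem flip_metric_compatibility (q : ℝ) (hq : 0 < q) (hq1 : q ≠ 1) :
    IsUnit ((q : ℂ) • Rhat q) ∧
    (∀ i m n h : Fin 3,
      (∑ j : Fin 3, ∑ k : Fin 3, ∑ l : Fin 3,
        ((q : ℂ) • Rhat q) (i, j) (h, k) * gm q k l * ((q : ℂ) • Rhat q) (m, n) (j, l)) =
      (q : ℂ) ^ 2 * gm q i m * (if n = h then 1 else 0)) ∧
    (∀ i m n h : Fin 3,
      (∑ j : Fin 3, ∑ k : Fin 3, ∑ l : Fin 3,
        ((q : ℂ) • Rhat q)⁻¹ (i, j) (h, k) * gm q k l * ((q : ℂ) • Rhat q)⁻¹ (m, n) (j, l)) =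
      ((q : ℂ) ^ 2)⁻¹ * gm q i m * (if n = h then 1 else 0)) := by
  have hs0 : ((Real.sqrt q : ℝ) : ℂ) ≠ 0 := by
    exact_mod_cast (Real.sqrt_pos.mpr hq).ne'
  have hq2 : (q : ℂ) = ((Real.sqrt q : ℝ) : ℂ) ^ 2 := by
    rw [← Complex.ofReal_pow, Real.sq_sqrt hq.le]
  have hAB := right_inv q hq
  have hinv : ((q : ℂ) • Rhat q)⁻¹ = Binv q := Matrix.inv_eq_right_inv hAB
  have hu : IsUnit ((q : ℂ) • Rhat q) :=
    (Matrix.isUnit_iff_isUnit_det _).mpr (Matrix.isUnit_det_of_right_inverse hAB)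
  refine ⟨hu, ?_, ?_⟩
  · intro i m n h
    fin_cases i <;> fin_cases m <;> fin_cases n <;> fin_cases h <;>
      simp only [fm0, fm1, fm2, Matrix.smul_apply, smul_eq_mul, Fin.sum_univ_three, Prod.mk.injEq, Rh0000, Bv0000, Rh0001, Bv0001, Rh0002, Bv0002, Rh0010, Bv0010, Rh0011, Bv0011, Rh0012, Bv0012, Rh0020, Bv0020, Rh0021, Bv0021, Rh0022, Bv0022, Rh0100, Bv0100, Rh0101, Bv0101, Rh0102, Bv0102, Rh0110, Bv0110, Rh0111, Bv0111, Rh0112, Bv0112, Rh0120, Bv0120, Rh0121, Bv0121, Rh0122, Bv0122, Rh0200, Bv0200, Rh0201, Bv0201, Rh0202, Bv0202, Rh0210, Bv0210, Rh0211, Bv0211, Rh0212, Bv0212, Rh0220, Bv0220, Rh0221, Bv0221, Rh0222, Bv0222, Rh1000, Bv1000, Rh1001, Bv1001, Rh1002, Bv1002, Rh1010, Bv1010, Rh1011, Bv1011, Rh1012, Bv1012, Rh1020, Bv1020, Rh1021, Bv1021, Rh1022, Bv1022, Rh1100, Bv1100, Rh1101, Bv1101, Rh1102, Bv1102, Rh1110,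 Bv1110, Rh1111, Bv1111, Rh1112, Bv1112, Rh1120, Bv1120, Rh1121, Bv1121, Rh1122, Bv1122, Rh1200, Bv1200, Rh1201, Bv1201, Rh1202, Bv1202, Rh1210, Bv1210, Rh1211, Bv1211, Rh1212, Bv1212, Rh1220, Bv1220, Rh1221, Bv1221, Rh1222, Bv1222, Rh2000, Bv2000, Rh2001, Bv2001, Rh2002, Bv2002, Rh2010, Bv2010, Rh2011, Bv2011, Rh2012, Bv2012, Rh2020, Bv2020, Rh2021, Bv2021, Rh2022, Bv2022, Rh2100, Bv2100, Rh2101, Bv2101, Rh2102, Bv2102, Rh2110, Bv2110, Rh2111, Bv2111, Rh2112, Bv2112, Rh2120, Bv2120, Rh2121, Bv2121, Rh2122, Bv2122, Rh2200, Bv2200, Rh2201, Bv2201, Rh2202, Bv2202, Rh2210, Bv2210, Rh2211, Bv2211, Rh2212, Bv2212, Rh2220, Bv2220, Rh2221, Bv2221, Rh2222, Bv2222, G00, G01, G02, G10, G11, G12, G20, G21, G22, hq2] <;>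
      first
        | rfl
        | (norm_num [Fin.ext_iff]
           try field_simp
           try ring)
    all_goals try (field_simp; ring)
    all_goals exact Or.inl trivial
  · intro i m n h
    simp only [hinv]
    fin_cases i <;> fin_cases m <;> fin_cases n <;> fin_cases h <;>
      simp only [fm0, fm1, fm2, Fin.sum_univ_three, Prod.mk.injEq, Rh0000, Bv0000, Rh0001, Bv0001, Rh0002, Bv0002, Rh0010, Bv0010, Rh0011, Bv0011, Rh0012, Bv0012, Rh0020, Bv0020, Rh0021, Bv0021, Rh0022, Bv0022, Rh0100, Bv0100, Rh0101, Bv0101, Rh0102, Bv0102, Rh0110, Bv0110, Rh0111, Bv0111, Rh0112, Bv0112, Rh0120, Bv0120, Rh0121, Bv0121, Rh0122, Bv0122, Rh0200, Bv0200, Rh0201, Bv0201, Rh0202, Bv0202, Rh0210, Bv0210, Rh0211, Bv0211, Rh0212, Bv0212, Rh0220, Bv0220, Rh0221, Bv0221, Rh0222, Bv0222, Rh1000, Bv1000, Rh1001, Bv1001, Rh1002, Bv1002, Rh1010, Bv1010, Rh1011, Bv1011, Rh1012, Bv1012, Rh1020, Bv1020, Rh1021, Bv1021, Rh1022, Bv1022,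 Rh1100, Bv1100, Rh1101, Bv1101, Rh1102, Bv1102, Rh1110, Bv1110, Rh1111, Bv1111, Rh1112, Bv1112, Rh1120, Bv1120, Rh1121, Bv1121, Rh1122, Bv1122, Rh1200, Bv1200, Rh1201, Bv1201, Rh1202, Bv1202, Rh1210, Bv1210, Rh1211, Bv1211, Rh1212, Bv1212, Rh1220, Bv1220, Rh1221, Bv1221, Rh1222, Bv1222, Rh2000, Bv2000, Rh2001, Bv2001, Rh2002, Bv2002, Rh2010, Bv2010, Rh2011, Bv2011, Rh2012, Bv2012, Rh2020, Bv2020, Rh2021, Bv2021, Rh2022, Bv2022, Rh2100, Bv2100, Rh2101, Bv2101, Rh2102, Bv2102, Rh2110, Bv2110, Rh2111, Bv2111, Rh2112, Bv2112, Rh2120, Bv2120, Rh2121, Bv2121, Rh2122, Bv2122, Rh2200, Bv2200, Rh2201, Bv2201, Rh2202, Bv2202, Rh2210, Bv2210, Rh2211, Bv2211, Rh2212, Bv2212, Rh2220, Bv2220, Rh2221, Bv2221, Rh2222, Bv2222, G00, G01, G02, G10, G11, G12, G20, G21, G22, hq2] <;>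
      first
        | rfl
        | (norm_num [Fin.ext_iff]
           try field_simp
           try ring)
    all_goals try (field_simp; ring)
    all_goals exact Or.inl trivial

end
end

section
/- The Dirac operator generates the exterior derivative of the SO_q(3)-covariant calculus: in the algebra Ω, setting w := Σ_{j,k} g_{jk} x^j ξ^k = q^{-1/2} x^1 ξ^3 + x^2 ξ^2 + q^{1/2} x^3 ξ^1, one has q^2 (x^i w − w x^i) = (q − 1) r^2 ξ^i for each i ∈ {1, 2, 3} (this is the denominator-free form of the identity dx^i = ξ^i = −[θ, x^i] for the Dirac operator θ = (q − 1)^{-1} q^2 r^{-2} w). -/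
noncomputable section

/-- The free unital `ℂ`-algebra on six generators: `x¹, x², x³` and `ξ¹, ξ², ξ³`. -/
abbrev FreeO := FreeAlgebra ℂ (Fin 6)

/-- The coordinate generators `x^i` of the free algebra, `i = 0, 1, 2` ↔ `1, 2, 3`. -/
def Xf (i : Fin 3) : FreeO := FreeAlgebra.ι ℂ ⟨i.1, by omega⟩

/-- The differential generators `ξ^i` of the free algebra. -/
def Ξf (i : Fin 3) : FreeO := FreeAlgebra.ι ℂ ⟨i.1 + 3, by omega⟩

/-- The defining relations of the algebra `Ω` of the `SO_q(3)`-covariant differential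
calculus: `x¹x² = q x²x¹`, `x³x² = q⁻¹ x²x³`, `x³x¹ − x¹x³ = h (x²)²` with
`h = q^{1/2} − q^{-1/2}`, and `x^i ξ^j = q Σ_{k,l} R̂^{ij}_{kl} ξ^k x^l`. -/
inductive ΩRel (q : ℝ) : FreeO → FreeO → Prop
  | rel1 : ΩRel q (Xf 0 * Xf 1) ((q : ℂ) • (Xf 1 * Xf 0))
  | rel2 : ΩRel q (Xf 2 * Xf 1) (((q : ℂ))⁻¹ • (Xf 1 * Xf 2))
  | rel3 : ΩRel q (Xf 2 * Xf 0 - Xf 0 * Xf 2)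
      (((Real.sqrt q - (Real.sqrt q)⁻¹ : ℝ) : ℂ) • (Xf 1 * Xf 1))
  | relxξ (i j : Fin 3) : ΩRel q (Xf i * Ξf j)
      ((q : ℂ) • ∑ k : Fin 3, ∑ l : Fin 3, Rhat q (i, j) (k, l) • (Ξf k * Xf l))

/-- The algebra `Ω` of the `SO_q(3)`-covariant differential calculus. -/
abbrev ΩAlg (q : ℝ) := RingQuot (ΩRel q)

/-- The coordinates `x^i` in `Ω`. -/
def xΩ (q : ℝ) (i : Fin 3) : ΩAlg q := RingQuot.mkAlgHom ℂ (ΩRel q) (Xf i)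

/-- The differentials `ξ^i` in `Ω`. -/
def ξΩ (q : ℝ) (i : Fin 3) : ΩAlg q := RingQuot.mkAlgHom ℂ (ΩRel q) (Ξf i)

/-- The element `r² = q^{1/2} x³x¹ + (x²)² + q^{-1/2} x¹x³` of `Ω`. -/
def rsqΩ (q : ℝ) : ΩAlg q :=
  (Real.sqrt q : ℂ) • (xΩ q 2 * xΩ q 0) + xΩ q 1 * xΩ q 1 +
    ((Real.sqrt q : ℂ))⁻¹ • (xΩ q 0 * xΩ q 2)

/-- The (un-normalized) Dirac operator `w = Σ_{j,k} g_{jk} x^j ξ^k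
= q^{-1/2} x¹ξ³ + x²ξ² + q^{1/2} x³ξ¹` in `Ω`. -/
def wΩ (q : ℝ) : ΩAlg q :=
  ∑ j : Fin 3, ∑ k : Fin 3, gm q j k • (xΩ q j * ξΩ q k)


set_option maxHeartbeats 16000000

section MAux
variable {s : ℂ}
lemma Ma (hs : s ≠ 0) {a b : ℕ} (h : b ≤ a) : s ^ a * (s ^ b)⁻¹ = s ^ (a - b) := by
  rw [← inv_pow]
  calc s ^ a * s⁻¹ ^ b = s ^ (a - b) * (s ^ b * s⁻¹ ^ b) := by
        rw [← mul_assoc, ← pow_add, Nat.sub_add_cancel h]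
    _ = s ^ (a - b) := by rw [← mul_pow, mul_inv_cancel₀ hs, one_pow, mul_one]
lemma Mb (hs : s ≠ 0) {a b : ℕ} (h : a ≤ b) : s ^ a * (s ^ b)⁻¹ = (s ^ (b - a))⁻¹ := by
  rw [← inv_pow, ← inv_pow]
  calc s ^ a * s⁻¹ ^ b = (s ^ a * s⁻¹ ^ a) * s⁻¹ ^ (b - a) := by
        rw [mul_assoc, ← pow_add, Nat.add_sub_cancel' h]
    _ = s⁻¹ ^ (b - a) := by rw [← mul_pow, mul_inv_cancel₀ hs, one_pow, one_mul]
lemma Ma' (hs : s ≠ 0) (x : ℂ) {a b : ℕ} (h : b ≤ a) :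
    x * s ^ a * (s ^ b)⁻¹ = x * s ^ (a - b) := by rw [mul_assoc, Ma hs h]
lemma Mb' (hs : s ≠ 0) (x : ℂ) {a b : ℕ} (h : a ≤ b) :
    x * s ^ a * (s ^ b)⁻¹ = x * (s ^ (b - a))⁻¹ := by rw [mul_assoc, Mb hs h]
lemma Mc (hs : s ≠ 0) {a b : ℕ} (h : b ≤ a) : (s ^ b)⁻¹ * s ^ a = s ^ (a - b) := by
  rw [mul_comm, Ma hs h]
lemma Md (hs : s ≠ 0) {a b : ℕ} (h : a ≤ b) : (s ^ b)⁻¹ * s ^ a = (s ^ (b - a))⁻¹ := by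
  rw [mul_comm, Mb hs h]
lemma Mc' (hs : s ≠ 0) (x : ℂ) {a b : ℕ} (h : b ≤ a) :
    x * (s ^ b)⁻¹ * s ^ a = x * s ^ (a - b) := by rw [mul_assoc, Mc hs h]
lemma Md' (hs : s ≠ 0) (x : ℂ) {a b : ℕ} (h : a ≤ b) :
    x * (s ^ b)⁻¹ * s ^ a = x * (s ^ (b - a))⁻¹ := by rw [mul_assoc, Md hs h]
lemma Me (hs : s ≠ 0) {b : ℕ} (h : 1 ≤ b) : s * (s ^ b)⁻¹ = (s ^ (b - 1))⁻¹ := by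
  nth_rewrite 1 [← pow_one s]
  rw [Mb hs h]
lemma Me' (hs : s ≠ 0) (x : ℂ) {b : ℕ} (h : 1 ≤ b) :
    x * s * (s ^ b)⁻¹ = x * (s ^ (b - 1))⁻¹ := by rw [mul_assoc, Me hs h]
lemma Mf (hs : s ≠ 0) {b : ℕ} (h : 1 ≤ b) : (s ^ b)⁻¹ * s = (s ^ (b - 1))⁻¹ := by
  rw [mul_comm, Me hs h]
lemma Mf' (hs : s ≠ 0) (x : ℂ) {b : ℕ} (h : 1 ≤ b) :
    x * (s ^ b)⁻¹ * s = x * (s ^ (b - 1))⁻¹ := by rw [mul_assoc, Mf hs h]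

lemma Mg (hs : s ≠ 0) {a : ℕ} (h : 1 ≤ a) : s ^ a * s⁻¹ = s ^ (a - 1) := by
  have h1 : s⁻¹ = (s ^ 1)⁻¹ := by rw [pow_one]
  rw [h1, Ma hs h]
lemma Mg' (hs : s ≠ 0) (x : ℂ) {a : ℕ} (h : 1 ≤ a) :
    x * s ^ a * s⁻¹ = x * s ^ (a - 1) := by rw [mul_assoc, Mg hs h]
lemma Mh (hs : s ≠ 0) {a : ℕ} (h : 1 ≤ a) : s⁻¹ * s ^ a = s ^ (a - 1) := by
  rw [mul_comm, Mg hs h]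
lemma Mh' (hs : s ≠ 0) (x : ℂ) {a : ℕ} (h : 1 ≤ a) :
    x * s⁻¹ * s ^ a = x * s ^ (a - 1) := by rw [mul_assoc, Mh hs h]
end MAux

section Aux
variable (q : ℝ)

lemma relXξ (i j : Fin 3) :
    xΩ q i * ξΩ q j =
      (q : ℂ) • ∑ k : Fin 3, ∑ l : Fin 3, Rhat q (i, j) (k, l) • (ξΩ q k * xΩ q l) := by
  have h := RingQuot.mkAlgHom_rel ℂ (ΩRel.relxξ (q := q) i j)
  rw [map_smul] at h
  simp only [map_sum, map_smul, map_mul] at h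
  simpa [xΩ, ξΩ] using h

lemma relXξ' (i j : Fin 3) (c : ΩAlg q) :
    xΩ q i * (ξΩ q j * c) =
      (q : ℂ) • ∑ k : Fin 3, ∑ l : Fin 3, Rhat q (i, j) (k, l) • (ξΩ q k * (xΩ q l * c)) := by
  rw [← mul_assoc, relXξ]
  simp [Finset.sum_mul, smul_mul_assoc, mul_assoc]

lemma relX01 : xΩ q 0 * xΩ q 1 = (q : ℂ) • (xΩ q 1 * xΩ q 0) := by
  have h := RingQuot.mkAlgHom_rel ℂ (ΩRel.rel1 (q := q))
  rw [map_smul] at h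
  simpa [xΩ, map_mul] using h

lemma relX01' (c : ΩAlg q) : xΩ q 0 * (xΩ q 1 * c) = (q : ℂ) • (xΩ q 1 * (xΩ q 0 * c)) := by
  rw [← mul_assoc, relX01, smul_mul_assoc, mul_assoc]

lemma relX21 : xΩ q 2 * xΩ q 1 = ((q : ℂ))⁻¹ • (xΩ q 1 * xΩ q 2) := by
  have h := RingQuot.mkAlgHom_rel ℂ (ΩRel.rel2 (q := q))
  rw [map_smul] at h
  simpa [xΩ, map_mul] using h

lemma relX21' (c : ΩAlg q) : xΩ q 2 * (xΩ q 1 * c) = ((q : ℂ))⁻¹ • (xΩ q 1 * (xΩ q 2 * c)) := by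
  rw [← mul_assoc, relX21, smul_mul_assoc, mul_assoc]

lemma relX20 : xΩ q 2 * xΩ q 0 =
    xΩ q 0 * xΩ q 2 + ((Real.sqrt q : ℂ) - ((Real.sqrt q : ℂ))⁻¹) • (xΩ q 1 * xΩ q 1) := by
  have h := RingQuot.mkAlgHom_rel ℂ (ΩRel.rel3 (q := q))
  rw [map_smul] at h
  simp only [map_sub, map_mul] at h
  have h2 : xΩ q 2 * xΩ q 0 - xΩ q 0 * xΩ q 2
      = ((Real.sqrt q : ℂ) - ((Real.sqrt q : ℂ))⁻¹) • (xΩ q 1 * xΩ q 1) := by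
    simpa [xΩ, Complex.ofReal_sub, Complex.ofReal_inv] using h
  linear_combination (norm := abel) h2

lemma relX20' (c : ΩAlg q) : xΩ q 2 * (xΩ q 0 * c) =
    xΩ q 0 * (xΩ q 2 * c)
      + ((Real.sqrt q : ℂ) - ((Real.sqrt q : ℂ))⁻¹) • (xΩ q 1 * (xΩ q 1 * c)) := by
  rw [← mul_assoc, relX20, add_mul, smul_mul_assoc, mul_assoc, mul_assoc]

end Aux

/-- The Dirac operator generates the exterior derivative: in `Ω`,
`q² (x^i w − w x^i) = (q − 1) r² ξ^i` for each `i` (the denominator-free form of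
`dx^i = ξ^i = −[θ, x^i]` for `θ = (q − 1)⁻¹ q² r⁻² w`). -/
theorem dirac_generates_d (q : ℝ) (hq : 0 < q) (hq1 : q ≠ 1) :
    ∀ i : Fin 3,
      ((q : ℂ) ^ 2) • (xΩ q i * wΩ q - wΩ q * xΩ q i) =
        ((q : ℂ) - 1) • (rsqΩ q * ξΩ q i) := by
  intro i
  have hs0 : (Real.sqrt q : ℂ) ≠ 0 := by
    simpa using (Real.sqrt_ne_zero'.mpr hq)
  have hQ : (q : ℂ) = (Real.sqrt q : ℂ) * (Real.sqrt q : ℂ) := by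
    rw [← Complex.ofReal_mul, Real.mul_self_sqrt hq.le]
  fin_cases i <;>
  · simp only [Fin.zero_eta, Fin.mk_one, Fin.reduceFinMk, Fin.isValue]
    simp only [wΩ, rsqΩ, gm, Fin.sum_univ_three, Fin.isValue]
    simp only [relXξ, relXξ', relX01, relX01', relX21, relX21', relX20, relX20',
      Rhat, Rfrt, Fin.val_zero, Fin.val_one, Fin.val_two, Fin.sum_univ_three, Fin.isValue, zero_smul, smul_zero, add_zero, zero_add,
      smul_add, smul_smul, mul_add, add_mul, mul_smul_comm, smul_mul_assoc, mul_assoc,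
      one_smul, zero_mul, mul_zero, sub_mul, mul_sub, smul_sub]
    match_scalars
    all_goals try rw [hQ]
    all_goals try ring
    all_goals try (
      ring_nf
      simp [Ma hs0, Mb hs0, Ma' hs0, Mb' hs0, Mc hs0, Md hs0, Mc' hs0, Md' hs0,
        Me hs0, Me' hs0, Mf hs0, Mf' hs0, Mg hs0, Mg' hs0, Mh hs0, Mh' hs0,
        mul_inv_cancel₀ hs0, inv_mul_cancel₀ hs0]
      try ring)
    all_goals (field_simp; ring)


end
end
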